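/- arXiv:1806.10946 — 4 statements merged into one kernel-verified Lean document; each statement's English description precedes it below -/
import Mathlib

section
/- Let G be a finite p-group acting on V over a field k of characteristic p, let 𝒳 be a set of proper subgroups of G, and let I^G_𝒳 = Σ_{X∈𝒳} Tr^G_X(k[V]^X) be the associated transfer ideal of k[V]^G. Let x_1 be a dual basis variable corresponding to a nonzero G-fixed basis vector and N_1 = Π_{σ∈G} σ·x_1 its norm. Then the image of N_1 in R = k[V]^G / I^G_𝒳 is a regular element (a non-zerodivisor) of R. -/
open MvPolynomial

/-- The ring of `H`-invariants in `R`. -/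
def invSub (G R : Type) [Group G] [CommRing R] [MulSemiringAction G R]
    (H : Subgroup G) : Subring R where
  carrier := {f : R | ∀ h : H, (h : G) • f = f}
  mul_mem' := fun ha hb h => by rw [smul_mul', ha h, hb h]
  one_mem' := fun h => smul_one _
  add_mem' := fun ha hb h => by rw [smul_add, ha h, hb h]
  zero_mem' := fun h => smul_zero _
  neg_mem' := fun ha h => by rw [smul_neg, (ha h : _)]

/-- The relative transfer `Tr^H_K`, summing over representatives of `H/K`. -/
noncomputable def relTransfer (G R : Type) [Group G] [Finite G] [CommRing R]
    [MulSemiringAction G R] (H K : Subgroup G) (f : R) : R :=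
  haveI : Fintype (H ⧸ K.subgroupOf H) := Fintype.ofFinite _
  ∑ c : H ⧸ K.subgroupOf H, ((Quotient.out c : H) : G) • f

/-- The transfer ideal `I^G_𝒳 = Σ_{X ∈ 𝒳} Tr^G_X(k[V]^X)` of `k[V]^G`. -/
noncomputable def transferIdealFamily (G R : Type) [Group G] [Finite G] [CommRing R]
    [MulSemiringAction G R] (𝓧 : Set (Subgroup G)) : Ideal (invSub G R ⊤) :=
  Ideal.span {y | ∃ X ∈ 𝓧, ∃ f : R, (∀ x : X, (x : G) • f = f) ∧
    (y : R) = relTransfer G R ⊤ X f}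

/-- The norm `N₁ = Π_{σ∈G} σ·x₁`, as an element of `k[V]^G`. -/
noncomputable def normElt (k : Type) [Field k] (n : ℕ) (G : Type) [Group G] [Fintype G]
    [MulSemiringAction G (MvPolynomial (Fin n) k)] (i : Fin n) :
    invSub G (MvPolynomial (Fin n) k) ⊤ :=
  ⟨∏ σ : G, σ • (X i : MvPolynomial (Fin n) k), by
    intro τ
    have h1 : (τ : G) • (∏ σ : G, σ • (X i : MvPolynomial (Fin n) k)) =
        ∏ σ : G, (τ : G) • σ • (X i : MvPolynomial (Fin n) k) :=
      map_prod (MulSemiringAction.toRingHom G _ (τ : G)) _ _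
    rw [h1]
    exact Fintype.prod_equiv (Equiv.mulLeft (τ : G)) _ _
      (fun σ => (mul_smul (τ : G) σ _).symm)⟩

/-!
Write `k[V] = A[x₁]` with `A = k[x₂, …, xₙ]`. Since `v₁` is fixed, every `σ • x₁` is `x₁` plus a
linear form in the other variables and every `σ • xⱼ` (`j > 1`) is free of `x₁`; so `G` does not
raise the `x₁`-degree and `N₁` is monic in `x₁`. Division with remainder by `N₁` is then
`G`-equivariant: the quotient of an `X`-invariant `f` is `X`-invariant, so
`Tr^G_X(f) = N₁ · Tr^G_X(u) + (remainder of degree < |G|)`. Hence every element of `I^G_𝒳` has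
the form `N₁ z + r` with `z ∈ I^G_𝒳` and `deg r < |G|`, and if `N₁ F ∈ I^G_𝒳` then uniqueness of
the division gives `F = z ∈ I^G_𝒳`.
-/

namespace Polynomial

variable {A B : Type} [CommRing A] [CommRing B]

theorem degree_ringHom_apply_le (φ : A[X] →+* B[X]) (hC : ∀ a, (φ (C a)).degree ≤ 0)
    (hX : (φ X).degree ≤ 1) (p : A[X]) : (φ p).degree ≤ p.degree := by
  conv_lhs => rw [p.as_sum_support_C_mul_X_pow, map_sum]
  refine (degree_sum_le _ _).trans (Finset.sup_le fun i hi => ?_)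
  calc (φ (C (p.coeff i) * X ^ i)).degree
      ≤ (φ (C (p.coeff i))).degree + (φ X ^ i).degree := by
        rw [map_mul, map_pow]; exact degree_mul_le _ _
    _ ≤ 0 + i • (1 : WithBot ℕ) :=
        add_le_add (hC _) ((degree_pow_le _ _).trans (nsmul_le_nsmul_right hX i))
    _ = i := by simp
    _ ≤ p.degree := le_degree_of_ne_zero (mem_support_iff.mp hi)

theorem Monic.exists_eq_mul_add_mem_degreeLT {q : A[X]} (hq : q.Monic) (p : A[X]) :
    ∃ u, ∃ r ∈ degreeLT A q.natDegree, p = q * u + r := by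
  nontriviality A
  refine ⟨p /ₘ q, p %ₘ q, ?_, by rw [add_comm, modByMonic_add_div p q]⟩
  rw [mem_degreeLT, ← degree_eq_natDegree hq.ne_zero]
  exact degree_modByMonic_lt p hq

theorem Monic.eq_zero_of_mul_mem_degreeLT {q p : A[X]} (hq : q.Monic)
    (h : q * p ∈ degreeLT A q.natDegree) : p = 0 := by
  nontriviality A
  by_contra hp
  rw [mem_degreeLT, mul_comm, hq.degree_mul, ← degree_eq_natDegree hq.ne_zero] at h
  exact h.not_ge (le_add_of_nonneg_left (zero_le_degree_iff.mpr hp))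

end Polynomial

section Transfer

variable {G R : Type} [Group G] [CommRing R] [MulSemiringAction G R]

theorem out_smul_eq_of_invariant {H K : Subgroup G} {f : R} (hf : ∀ x : K, (x : G) • f = f)
    (a : H) : ((Quotient.out (a : H ⧸ K.subgroupOf H) : H) : G) • f = (a : G) • f := by
  obtain ⟨x, hx⟩ := QuotientGroup.mk_out_eq_mul (K.subgroupOf H) a
  rw [hx, Subgroup.coe_mul, mul_smul, hf ⟨_, Subgroup.mem_subgroupOf.mp x.2⟩]

variable [Finite G]

theorem smul_relTransfer {H K : Subgroup G} {f : R} (hf : ∀ x : K, (x : G) • f = f) (h : H) :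
    (h : G) • relTransfer G R H K f = relTransfer G R H K f := by
  let _ : Fintype (H ⧸ K.subgroupOf H) := Fintype.ofFinite _
  unfold relTransfer
  rw [Finset.smul_sum]
  refine Fintype.sum_bijective (h • ·) (MulAction.bijective h) _ _ fun c => ?_
  have hc : h • c = ((h * c.out : H) : H ⧸ K.subgroupOf H) := by
    conv_lhs => rw [← QuotientGroup.out_eq' c]
    rfl
  rw [hc, out_smul_eq_of_invariant hf, Subgroup.coe_mul, mul_smul]

theorem relTransfer_sub (H K : Subgroup G) (f f' : R) :
    relTransfer G R H K (f - f') = relTransfer G R H K f - relTransfer G R H K f' := by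
  simp only [relTransfer, smul_sub, Finset.sum_sub_distrib]

theorem relTransfer_mul_of_invariant (H K : Subgroup G) {c : R} (hc : ∀ h : H, (h : G) • c = c)
    (f : R) : relTransfer G R H K (c * f) = c * relTransfer G R H K f := by
  simp only [relTransfer, smul_mul', hc, Finset.mul_sum]

theorem relTransfer_mem {S : AddSubgroup R} (hS : ∀ g : G, ∀ s ∈ S, g • s ∈ S)
    (H K : Subgroup G) {r : R} (hr : r ∈ S) : relTransfer G R H K r ∈ S :=
  S.sum_mem fun _ _ => hS _ _ hr

end Transfer

section DivisionByInvariant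

variable {G R : Type} [Group G] [CommRing R] [MulSemiringAction G R]
  {N : invSub G R ⊤} {S : AddSubgroup R}

theorem exists_invariant_quotient (hS : ∀ g : G, ∀ s ∈ S, g • s ∈ S)
    (hdiv : ∀ f : R, ∃ u, ∃ r ∈ S, f = N * u + r) (hNS : ∀ u : R, N * u ∈ S → u = 0)
    (H : Subgroup G) {f : R} (hf : ∀ x : H, (x : G) • f = f) :
    ∃ u : R, (∀ x : H, (x : G) • u = u) ∧ f - N * u ∈ S := by
  obtain ⟨u, r, hr, rfl⟩ := hdiv f
  refine ⟨u, fun x => ?_, by simpa using hr⟩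
  have hfx := hf x
  rw [smul_add, smul_mul', N.2 ⟨x, Subgroup.mem_top _⟩] at hfx
  have hdiff : (N : R) * ((x : G) • u - u) = r - (x : G) • r := by linear_combination hfx
  exact sub_eq_zero.mp (hNS _ (hdiff ▸ S.sub_mem hr (hS _ _ hr)))

variable [Finite G]

theorem exists_mem_transferIdealFamily_sub_mul_mem (hS : ∀ g : G, ∀ s ∈ S, g • s ∈ S)
    (hdiv : ∀ f : R, ∃ u, ∃ r ∈ S, f = N * u + r) (hNS : ∀ u : R, N * u ∈ S → u = 0)
    {𝓧 : Set (Subgroup G)} {y : invSub G R ⊤} (hy : y ∈ transferIdealFamily G R 𝓧) :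
    ∃ z ∈ transferIdealFamily G R 𝓧, (y : R) - N * z ∈ S := by
  -- `{y | ∃ z ∈ I, y - N * z ∈ S}` is not an ideal, so a multiplier `c` is carried through
  -- the induction
  suffices ∀ c : invSub G R ⊤,
      ∃ z ∈ transferIdealFamily G R 𝓧, ((c * y : invSub G R ⊤) : R) - N * z ∈ S by
    simpa using this 1
  induction hy using Submodule.span_induction with
  | mem y hy =>
    intro c
    obtain ⟨X, hX, f, hf, hyf⟩ := hy
    have hcf : ∀ x : X, (x : G) • ((c : R) * f) = c * f := fun x => by
      rw [smul_mul', c.2 ⟨x, Subgroup.mem_top _⟩, hf x]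
    obtain ⟨u, hu, hcfu⟩ := exists_invariant_quotient hS hdiv hNS X hcf
    refine ⟨⟨relTransfer G R ⊤ X u, smul_relTransfer hu⟩,
      Ideal.subset_span ⟨X, hX, u, hu, rfl⟩, ?_⟩
    have hN : ∀ g : (⊤ : Subgroup G), (g : G) • (N : R) = N := N.2
    have hc : ∀ g : (⊤ : Subgroup G), (g : G) • (c : R) = c := c.2
    rw [Subring.coe_mul, hyf, ← relTransfer_mul_of_invariant _ _ hc,
      ← relTransfer_mul_of_invariant _ _ hN, ← relTransfer_sub]
    exact relTransfer_mem hS _ _ hcfu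
  | zero => exact fun _ => ⟨0, zero_mem _, by simp⟩
  | add y y' _ _ ih ih' =>
    intro c
    obtain ⟨z, hz, hyz⟩ := ih c
    obtain ⟨z', hz', hyz'⟩ := ih' c
    refine ⟨z + z', add_mem hz hz', ?_⟩
    convert S.add_mem hyz hyz' using 1
    push_cast
    ring
  | smul a y _ ih =>
    intro c
    simpa [smul_eq_mul, mul_assoc] using ih (c * a)

theorem mk_mem_nonZeroDivisors_transferIdealFamily (hS : ∀ g : G, ∀ s ∈ S, g • s ∈ S)
    (hdiv : ∀ f : R, ∃ u, ∃ r ∈ S, f = N * u + r) (hNS : ∀ u : R, N * u ∈ S → u = 0)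
    (𝓧 : Set (Subgroup G)) :
    Ideal.Quotient.mk (transferIdealFamily G R 𝓧) N ∈
      nonZeroDivisors (invSub G R ⊤ ⧸ transferIdealFamily G R 𝓧) := by
  rw [mem_nonZeroDivisors_iff_right]
  intro q hq
  obtain ⟨F, rfl⟩ := Ideal.Quotient.mk_surjective q
  rw [← map_mul, Ideal.Quotient.eq_zero_iff_mem] at hq
  rw [Ideal.Quotient.eq_zero_iff_mem]
  obtain ⟨z, hz, hFz⟩ := exists_mem_transferIdealFamily_sub_mul_mem hS hdiv hNS hq
  have hNFz : (N : R) * (F - z) ∈ S := by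
    convert hFz using 1
    push_cast
    ring
  rwa [Subtype.ext (sub_eq_zero.mp (hNS _ hNFz))]

open Polynomial in
theorem mk_mem_nonZeroDivisors_of_monic {A : Type} [CommRing A] (e : R ≃+* A[X])
    (hN : (e N).Monic) (hdeg : ∀ (g : G) (r : R), (e (g • r)).degree ≤ (e r).degree)
    (𝓧 : Set (Subgroup G)) :
    Ideal.Quotient.mk (transferIdealFamily G R 𝓧) N ∈
      nonZeroDivisors (invSub G R ⊤ ⧸ transferIdealFamily G R 𝓧) := by
  have hmem (r : R) : r ∈ (degreeLT A (e N).natDegree).toAddSubgroup.comap (e : R →+ A[X]) ↔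
      e r ∈ degreeLT A (e N).natDegree := Iff.rfl
  refine mk_mem_nonZeroDivisors_transferIdealFamily
    (S := (degreeLT A (e N).natDegree).toAddSubgroup.comap (e : R →+ A[X])) ?_ ?_ ?_ 𝓧
  · intro g s hs
    rw [hmem, mem_degreeLT] at hs ⊢
    exact (hdeg g s).trans_lt hs
  · intro f
    obtain ⟨u, r, hr, hf⟩ := hN.exists_eq_mul_add_mem_degreeLT (e f)
    exact ⟨e.symm u, e.symm r, by simpa [hmem] using hr, e.injective (by simpa using hf)⟩
  · intro u hu
    rw [hmem, map_mul] at hu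
    simpa using hN.eq_zero_of_mul_mem_degreeLT hu

end DivisionByInvariant

section FinSuccEquiv

variable {k : Type} [CommRing k] {m : ℕ}

theorem natDegree_finSuccEquiv_le_of_isHomogeneous {p : MvPolynomial (Fin (m + 1)) k} {d : ℕ}
    (hp : p.IsHomogeneous d) : (finSuccEquiv k m p).natDegree ≤ d := by
  rw [natDegree_finSuccEquiv]
  exact (degreeOf_le_totalDegree p 0).trans hp.totalDegree_le

theorem coeff_one_finSuccEquiv_of_isHomogeneous {p : MvPolynomial (Fin (m + 1)) k}
    (hp : p.IsHomogeneous 1) :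
    (finSuccEquiv k m p).coeff 1 = C (coeff (Finsupp.single 0 1) p) := by
  ext w
  rw [finSuccEquiv_coeff_coeff, coeff_C]
  split_ifs with hw
  · rw [← hw, Finsupp.cons_zero_eq_single_zero]
  · apply hp.coeff_eq_zero
    have hcons : (Finsupp.cons 1 w).degree = 1 + w.degree := by
      simp [Finsupp.degree_eq_weight_one, Finsupp.weight_apply, Finsupp.sum_cons]
    have hw' : w.degree ≠ 0 := fun h => hw ((Finsupp.degree_eq_zero_iff w).mp h).symm
    omega

variable {G : Type} [Group G] [MulSemiringAction G (MvPolynomial (Fin (m + 1)) k)]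
  [SMulCommClass G k (MvPolynomial (Fin (m + 1)) k)]

theorem degree_finSuccEquiv_smul_le (g : G)
    (hzero : (finSuccEquiv k m (g • X 0)).degree ≤ 1)
    (hsucc : ∀ j : Fin m, (finSuccEquiv k m (g • X j.succ)).degree ≤ 0)
    (p : MvPolynomial (Fin (m + 1)) k) :
    (finSuccEquiv k m (g • p)).degree ≤ (finSuccEquiv k m p).degree := by
  set e := finSuccEquiv k m
  let φ := e.toRingHom.comp ((MulSemiringAction.toRingHom G _ g).comp e.symm.toRingHom)
  have hφ (q) : φ q = e (g • e.symm q) := rfl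
  have hC (a : MvPolynomial (Fin m) k) : (φ (Polynomial.C a)).degree ≤ 0 := by
    induction a using MvPolynomial.induction_on with
    | C c =>
      have hCC : Polynomial.C (C c) = algebraMap k (Polynomial (MvPolynomial (Fin m) k)) c := rfl
      rw [hφ, hCC, AlgEquiv.commutes, smul_algebraMap, AlgEquiv.commutes]
      exact Polynomial.degree_C_le
    | add a b ha hb =>
      rw [Polynomial.C_add, map_add]
      exact (Polynomial.degree_add_le _ _).trans (max_le ha hb)
    | mul_X a j ha =>
      have hXj : e.symm (Polynomial.C (X j)) = X j.succ :=
        e.symm_apply_eq.mpr finSuccEquiv_X_succ.symm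
      rw [Polynomial.C_mul, map_mul]
      refine (Polynomial.degree_mul_le _ _).trans ?_
      simpa [hφ, hXj] using add_le_add ha (hsucc j)
  have hX : φ Polynomial.X = e (g • X 0) := by
    rw [hφ, ← finSuccEquiv_X_zero, AlgEquiv.symm_apply_apply]
  simpa [hφ] using Polynomial.degree_ringHom_apply_le φ hC (hX ▸ hzero) (e p)

end FinSuccEquiv

theorem normElt_regular_mod_transferIdeal_general
    (k : Type) [Field k]
    (G : Type) [Group G] [Fintype G]
    (n : ℕ) (hn : 0 < n)
    [MulSemiringAction G (MvPolynomial (Fin n) k)]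
    [SMulCommClass G k (MvPolynomial (Fin n) k)]
    -- the action of `G` on `k[V]` is induced by a linear action on `V`:
    (hlin : ∀ (σ : G) (i : Fin n), (σ • (X i : MvPolynomial (Fin n) k)).IsHomogeneous 1)
    -- `v₁` is a `G`-fixed basis vector with dual variable `x₁`:
    (hfix : ∀ (σ : G) (i : Fin n),
      coeff (Finsupp.single (⟨0, hn⟩ : Fin n) 1) (σ • (X i : MvPolynomial (Fin n) k)) =
        if i = ⟨0, hn⟩ then 1 else 0)
    (𝓧 : Set (Subgroup G)) :
    Ideal.Quotient.mk (transferIdealFamily G (MvPolynomial (Fin n) k) 𝓧)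
        (normElt k n G ⟨0, hn⟩) ∈
      nonZeroDivisors ((invSub G (MvPolynomial (Fin n) k) ⊤) ⧸
        transferIdealFamily G (MvPolynomial (Fin n) k) 𝓧) := by
  obtain ⟨m, rfl⟩ : ∃ m, n = m + 1 := ⟨n - 1, by omega⟩
  set e := finSuccEquiv k m
  have hzero : (⟨0, hn⟩ : Fin (m + 1)) = 0 := rfl
  simp only [hzero] at hfix ⊢
  have hle (σ : G) (i : Fin (m + 1)) : (e (σ • X i)).natDegree ≤ 1 :=
    natDegree_finSuccEquiv_le_of_isHomogeneous (hlin σ i)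
  have hcoeff (σ : G) (i : Fin (m + 1)) : (e (σ • X i)).coeff 1 = if i = 0 then 1 else 0 := by
    rw [coeff_one_finSuccEquiv_of_isHomogeneous (hlin σ i), hfix]
    split_ifs <;> simp
  have hmonic (σ : G) : (e (σ • X 0)).Monic :=
    Polynomial.monic_of_natDegree_le_of_coeff_eq_one 1 (hle σ 0) (by simpa using hcoeff σ 0)
  have hsucc (σ : G) (j : Fin m) : (e (σ • X j.succ)).degree ≤ 0 := by
    rw [Polynomial.eq_X_add_C_of_natDegree_le_one (hle σ j.succ), hcoeff, if_neg j.succ_ne_zero]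
    simpa using Polynomial.degree_C_le
  refine mk_mem_nonZeroDivisors_of_monic e.toRingEquiv ?_ (fun g =>
    degree_finSuccEquiv_smul_le g (Polynomial.degree_le_of_natDegree_le (hle g 0)) (hsucc g)) 𝓧
  show (e (∏ σ : G, σ • X 0)).Monic
  rw [map_prod]
  exact Polynomial.monic_prod_of_monic _ _ fun σ _ => hmonic σ

/-- for a `p`-group `G` in characteristic `p` and a set `𝒳` of proper
subgroups of `G`, the image of the norm `N₁` of a dual variable of a fixed basis
vector is a non-zerodivisor in `k[V]^G / I^G_𝒳`. -/
theorem normElt_regular_mod_transferIdeal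
    (k : Type) [Field k] (p : ℕ) [Fact p.Prime] [CharP k p]
    (G : Type) [Group G] [Fintype G] (hG : IsPGroup p G)
    (n : ℕ) (hn : 0 < n)
    [MulSemiringAction G (MvPolynomial (Fin n) k)]
    [SMulCommClass G k (MvPolynomial (Fin n) k)]
    -- the action of `G` on `k[V]` is induced by a linear action on `V`:
    (hlin : ∀ (σ : G) (i : Fin n), (σ • (X i : MvPolynomial (Fin n) k)).IsHomogeneous 1)
    -- `v₁` is a `G`-fixed basis vector with dual variable `x₁`:
    (hfix : ∀ (σ : G) (i : Fin n),
      coeff (Finsupp.single (⟨0, hn⟩ : Fin n) 1) (σ • (X i : MvPolynomial (Fin n) k)) =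
        if i = ⟨0, hn⟩ then 1 else 0)
    (𝓧 : Set (Subgroup G)) (h𝓧 : ∀ X ∈ 𝓧, X ≠ ⊤) :
    Ideal.Quotient.mk (transferIdealFamily G (MvPolynomial (Fin n) k) 𝓧)
        (normElt k n G ⟨0, hn⟩) ∈
      nonZeroDivisors ((invSub G (MvPolynomial (Fin n) k) ⊤) ⧸
        transferIdealFamily G (MvPolynomial (Fin n) k) 𝓧) :=
  normElt_regular_mod_transferIdeal_general k G n hn hlin hfix 𝓧
end

section
/- Let G be a finite p-group acting on V over a field k of characteristic p, dim(V^G) = l, and let 𝒳 be any set of proper subgroups of G. Choose a basis v_1,...,v_l of V^G extended to a basis of V with dual basis x_1,...,x_n, and set N_i = Π_{σ∈G} σ·x_i for 1 ≤ i ≤ l. Then the images of N_1, ..., N_l form a regular sequence in the quotient ring k[V]^G / I^G_𝒳. In particular, depth(k[V]^G / I^G_𝒳) ≥ dim(V^G). -/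
/-!
Fix `j` with `v_j ∈ V^G`. Then the subring `A = k[x_i : i ≠ j]` is `G`-stable and
`σ • x_j ∈ x_j + A`, so `k[V] = A[x_j]` and `N_j = ∏_σ σ • x_j` is monic in `x_j`. Division by
`N_j` in `A[x_j]` is additive, `A`-linear and, by uniqueness of division with remainder,
`G`-equivariant. It therefore preserves `k[V]^G`, sends transfers to transfers and commutes with
multiplication by the `N_i ∈ A`, `i < j`; so it maps the ideal `(N_1, …, N_{j-1}) + I^G_𝒳` into
itself. As it sends `N_j r` back to `r`, `N_j` is a non-zero-divisor modulo that ideal.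
-/

open MvPolynomial

namespace Polynomial

variable {R : Type*} [CommRing R] {q : R[X]}

theorem add_divByMonic (p₁ p₂ : R[X]) : (p₁ + p₂) /ₘ q = p₁ /ₘ q + p₂ /ₘ q := by
  by_cases hq : q.Monic
  · nontriviality R
    refine (div_modByMonic_unique _ (p₁ %ₘ q + p₂ %ₘ q) hq ⟨?_, ?_⟩).1
    · linear_combination modByMonic_add_div p₁ q + modByMonic_add_div p₂ q
    · exact (degree_add_le _ _).trans_lt
        (max_lt (degree_modByMonic_lt _ hq) (degree_modByMonic_lt _ hq))
  · simp_rw [divByMonic_eq_of_not_monic _ hq, add_zero]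

theorem C_mul_divByMonic (a : R) (p : R[X]) : (C a * p) /ₘ q = C a * (p /ₘ q) := by
  by_cases hq : q.Monic
  · nontriviality R
    refine (div_modByMonic_unique _ (C a * (p %ₘ q)) hq ⟨?_, ?_⟩).1
    · linear_combination C a * modByMonic_add_div p q
    · rw [← smul_eq_C_mul]
      exact (degree_smul_le _ _).trans_lt (degree_modByMonic_lt _ hq)
  · simp_rw [divByMonic_eq_of_not_monic _ hq, mul_zero]

theorem map_divByMonic_of_degree_le (ψ : R[X] →+* R[X]) (hq : q.Monic) (hψq : ψ q = q)
    (hψ : ∀ p, (ψ p).degree ≤ p.degree) (p : R[X]) : ψ (p /ₘ q) = ψ p /ₘ q := by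
  nontriviality R
  refine (div_modByMonic_unique _ (ψ (p %ₘ q)) hq ⟨?_, ?_⟩).1.symm
  · rw [← hψq, ← map_mul, ← map_add, hψq, modByMonic_add_div]
  · exact (hψ _).trans_lt (degree_modByMonic_lt _ hq)

theorem degree_le_of_map_C_mem_range (ψ : R[X] →+* R[X]) (hC : ∀ a, ψ (C a) ∈ Set.range C)
    (hX : (ψ X).natDegree ≤ 1) (p : R[X]) : (ψ p).degree ≤ p.degree := by
  rcases eq_or_ne p 0 with rfl | hp
  · simp
  rw [degree_eq_natDegree hp]
  refine degree_le_of_natDegree_le ?_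
  conv_lhs => rw [p.as_sum_range_C_mul_X_pow, map_sum]
  refine natDegree_sum_le_of_forall_le _ _ fun i hi => ?_
  obtain ⟨b, hb⟩ := hC (p.coeff i)
  rw [map_mul, map_pow, ← hb]
  calc (C b * ψ X ^ i).natDegree ≤ i * (ψ X).natDegree :=
        (natDegree_C_mul_le _ _).trans natDegree_pow_le
    _ ≤ p.natDegree := by
        have := Finset.mem_range_succ_iff.1 hi
        nlinarith

end Polynomial

namespace MvPolynomial

variable {ι k : Type*} [CommRing k] {j : ι}

theorem map_mem_supported {s : Set ι} (θ : MvPolynomial ι k →ₐ[k] MvPolynomial ι k)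
    (hθ : ∀ i ∈ s, θ (X i) ∈ supported k s) {p : MvPolynomial ι k} (hp : p ∈ supported k s) :
    θ p ∈ supported k s :=
  (Algebra.adjoin_le (s := X '' s) (S := (supported k s).comap θ)
    (by rintro _ ⟨i, hi, rfl⟩; exact hθ i hi)) hp

theorem mem_supported_compl_singleton_iff {p : MvPolynomial ι k} :
    p ∈ supported k {j}ᶜ ↔ ∃ a : MvPolynomial {i // i ≠ j} k, rename Subtype.val a = p := by
  rw [mem_supported]
  constructor
  · intro h
    exact exists_rename_eq_of_vars_subset_range p _ Subtype.val_injective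
      (by rwa [Subtype.range_coe_subtype])
  · classical
    rintro ⟨a, rfl⟩ i hi
    obtain ⟨i', -, rfl⟩ := Finset.mem_image.1 (vars_rename _ a hi)
    exact i'.2

theorem mem_supported_compl_singleton_of_isHomogeneous_one {f : MvPolynomial ι k}
    (hf : f.IsHomogeneous 1) (hj : coeff (Finsupp.single j 1) f = 0) :
    f ∈ supported k {j}ᶜ := by
  rw [mem_supported]
  rintro i hi rfl
  obtain ⟨d, hd, hid⟩ := (mem_vars_iff_mem_support i).1 hi
  have hdeg : d.degree = 1 := by
    rw [Finsupp.degree_eq_weight_one]; exact hf (mem_support_iff.1 hd)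
  obtain ⟨a, rfl⟩ : d ∈ Set.range (Finsupp.single · 1) := Finsupp.range_single_one ▸ hdeg
  obtain rfl := Finset.mem_singleton.1 (Finsupp.support_single_subset hid)
  exact mem_support_iff.1 hd hj

section SplitVar

variable [DecidableEq ι]

noncomputable def splitVar (j : ι) :
    MvPolynomial ι k ≃ₐ[k] Polynomial (MvPolynomial {i // i ≠ j} k) :=
  (renameEquiv k (Equiv.optionSubtypeNe j).symm).trans (optionEquivLeft k _)

theorem splitVar_X_self (j : ι) : splitVar j (X j : MvPolynomial ι k) = Polynomial.X := by
  rw [splitVar, AlgEquiv.trans_apply, renameEquiv_apply, rename_X,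
    Equiv.optionSubtypeNe_symm_self, optionEquivLeft_X_none]

theorem splitVar_rename (a : MvPolynomial {i // i ≠ j} k) :
    splitVar j (rename Subtype.val a) = Polynomial.C a := by
  suffices (splitVar j).toAlgHom.comp (rename Subtype.val) = Polynomial.CAlgHom from
    DFunLike.congr_fun this a
  refine algHom_ext fun i => ?_
  rw [AlgHom.comp_apply, rename_X, AlgEquiv.coe_toAlgHom, splitVar, AlgEquiv.trans_apply,
    renameEquiv_apply, rename_X, Equiv.optionSubtypeNe_symm_of_ne i.2, optionEquivLeft_X_some]
  rfl

theorem splitVar_mem_range_C {p : MvPolynomial ι k} (hp : p ∈ supported k {j}ᶜ) :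
    splitVar j p ∈ Set.range Polynomial.C := by
  obtain ⟨a, rfl⟩ := mem_supported_compl_singleton_iff.1 hp
  exact ⟨a, (splitVar_rename a).symm⟩

noncomputable def divByMonicIn (j : ι) (N : MvPolynomial ι k) :
    MvPolynomial ι k →+ MvPolynomial ι k where
  toFun f := (splitVar j).symm (splitVar j f /ₘ splitVar j N)
  map_zero' := by simp
  map_add' f g := by simp [Polynomial.add_divByMonic]

variable {N : MvPolynomial ι k}

theorem divByMonicIn_mul_cancel_left (hN : (splitVar j N).Monic) (f : MvPolynomial ι k) :
    divByMonicIn j N (N * f) = f := by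
  simp [divByMonicIn, Polynomial.mul_divByMonic_cancel_left _ hN]

theorem divByMonicIn_mul_of_mem_supported {a : MvPolynomial ι k} (ha : a ∈ supported k {j}ᶜ)
    (f : MvPolynomial ι k) : divByMonicIn j N (a * f) = a * divByMonicIn j N f := by
  obtain ⟨b, hb⟩ := splitVar_mem_range_C (j := j) ha
  simp only [divByMonicIn, AddMonoidHom.coe_mk, ZeroHom.coe_mk, map_mul, ← hb]
  rw [Polynomial.C_mul_divByMonic, map_mul, hb, AlgEquiv.symm_apply_apply]

/-- Such `θ` do not raise the degree in `x_j`. -/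
theorem divByMonicIn_map (θ : MvPolynomial ι k →+* MvPolynomial ι k)
    (hθ : ∀ p ∈ supported k {j}ᶜ, θ p ∈ supported k {j}ᶜ)
    (hθX : θ (X j) - X j ∈ supported k {j}ᶜ) (hθN : θ N = N) (hN : (splitVar j N).Monic)
    (f : MvPolynomial ι k) : divByMonicIn j N (θ f) = θ (divByMonicIn j N f) := by
  set ψ := (splitVar j).toRingHom.comp (θ.comp (splitVar j).symm.toRingHom)
  have hψ : ∀ f, ψ (splitVar j f) = splitVar j (θ f) := by simp [ψ]
  have hψC : ∀ a, ψ (Polynomial.C a) ∈ Set.range Polynomial.C := by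
    intro a
    rw [← splitVar_rename, hψ]
    exact splitVar_mem_range_C (hθ _ (mem_supported_compl_singleton_iff.2 ⟨a, rfl⟩))
  have hψX : (ψ Polynomial.X).natDegree ≤ 1 := by
    obtain ⟨b, hb⟩ := splitVar_mem_range_C hθX
    rw [← splitVar_X_self, hψ, ← sub_add_cancel (θ (X j)) (X j), map_add, ← hb,
      splitVar_X_self]
    exact (Polynomial.natDegree_C_add).trans_le Polynomial.natDegree_X_le
  have := Polynomial.map_divByMonic_of_degree_le ψ hN (by rw [hψ, hθN])
    (Polynomial.degree_le_of_map_C_mem_range ψ hψC hψX) (splitVar j f)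
  simp only [divByMonicIn, AddMonoidHom.coe_mk, ZeroHom.coe_mk, ← hψ, ← this]
  simp [ψ]

end SplitVar

end MvPolynomial

theorem Ideal.apply_mem_of_forall_mul_mem {A : Type*} [CommSemiring A] (D : A →+ A) {S : Set A}
    {J : Ideal A} (hS : ∀ c, ∀ s ∈ S, D (c * s) ∈ J) {t : A} (ht : t ∈ Ideal.span S) :
    D t ∈ J := by
  suffices ∀ c, D (c * t) ∈ J by simpa using this 1
  induction ht using Submodule.span_induction with
  | mem s hs => exact fun c => hS c s hs
  | zero => simp
  | add x y _ _ hx hy => exact fun c => by rw [mul_add, map_add]; exact J.add_mem (hx c) (hy c)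
  | smul a x _ hx => exact fun c => by rw [smul_eq_mul, ← mul_assoc]; exact hx _

section Transfer

variable {G R : Type} [Group G] [CommRing R] [MulSemiringAction G R]

def invSubMap (q : R →+[G] R) (H : Subgroup G) : invSub G R H →+ invSub G R H where
  toFun a := ⟨q (a : R), fun h => by rw [← map_smul, a.2 h]⟩
  map_zero' := Subtype.ext (map_zero q)
  map_add' a b := Subtype.ext (map_add q (a : R) b)

@[simp]
theorem coe_invSubMap (q : R →+[G] R) (H : Subgroup G) (a : invSub G R H) :
    (invSubMap q H a : R) = q (a : R) :=
  rfl

variable [Finite G]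

theorem mul_relTransfer {H K : Subgroup G} {c : R} (hc : ∀ h : H, (h : G) • c = c) (f : R) :
    c * relTransfer G R H K f = relTransfer G R H K (c * f) := by
  simp only [relTransfer, Finset.mul_sum, smul_mul', hc]

theorem map_relTransfer (q : R →+[G] R) (H K : Subgroup G) (f : R) :
    q (relTransfer G R H K f) = relTransfer G R H K (q f) := by
  simp only [relTransfer, map_sum, map_smul]

theorem invSubMap_mem_transferIdealFamily (q : R →+[G] R) {𝓧 : Set (Subgroup G)}
    {t : invSub G R ⊤} (ht : t ∈ transferIdealFamily G R 𝓧) :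
    invSubMap q ⊤ t ∈ transferIdealFamily G R 𝓧 := by
  refine Ideal.apply_mem_of_forall_mul_mem _ ?_ ht
  rintro c s ⟨X, hX, f, hf, hs⟩
  refine Ideal.subset_span ⟨X, hX, q (c * f), fun x => ?_, ?_⟩
  · rw [← map_smul, smul_mul', c.2 ⟨x, trivial⟩, hf]
  · rw [coe_invSubMap, Subring.coe_mul, hs, mul_relTransfer c.2, map_relTransfer]

end Transfer

section FixedVariable

variable {ι k G : Type} [CommRing k] [Group G] [MulSemiringAction G (MvPolynomial ι k)] {j : ι}
  (hA : ∀ σ : G, ∀ i ≠ j, σ • X i ∈ supported k {j}ᶜ)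
  (hX : ∀ σ : G, σ • X j - X j ∈ supported k {j}ᶜ)

include hA in
theorem smul_mem_supported_compl_singleton [SMulCommClass G k (MvPolynomial ι k)] (σ : G)
    {p : MvPolynomial ι k} (hp : p ∈ supported k {j}ᶜ) : σ • p ∈ supported k {j}ᶜ :=
  map_mem_supported (MulSemiringAction.toAlgHom k _ σ) (hA σ) hp

include hX in
theorem monic_splitVar_prod_smul_X [DecidableEq ι] [Fintype G] :
    (splitVar j (∏ σ : G, σ • (X j : MvPolynomial ι k))).Monic := by
  rw [map_prod]
  refine Polynomial.monic_prod_of_monic _ _ fun σ _ => ?_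
  obtain ⟨b, hb⟩ := splitVar_mem_range_C (hX σ)
  rw [← sub_add_cancel (σ • X j) (X j), map_add, ← hb, splitVar_X_self, add_comm]
  exact Polynomial.monic_X_add_C b

variable [DecidableEq ι] [SMulCommClass G k (MvPolynomial ι k)]

include hA hX in
theorem divByMonicIn_smul {N : MvPolynomial ι k} (hN : ∀ σ : G, σ • N = N)
    (hmon : (splitVar j N).Monic) (σ : G) (f : MvPolynomial ι k) :
    divByMonicIn j N (σ • f) = σ • divByMonicIn j N f :=
  divByMonicIn_map (MulSemiringAction.toRingHom G _ σ)
    (fun _ => smul_mem_supported_compl_singleton hA σ) (hX σ) (hN σ) hmon f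

noncomputable def divByMonicInHom {N : MvPolynomial ι k} (hN : ∀ σ : G, σ • N = N)
    (hmon : (splitVar j N).Monic) : MvPolynomial ι k →+[G] MvPolynomial ι k :=
  { divByMonicIn j N with map_smul' := divByMonicIn_smul hA hX hN hmon }

end FixedVariable

section Norms

variable {k : Type} [Field k] {n : ℕ} {G : Type} [Group G] [Fintype G]
  [MulSemiringAction G (MvPolynomial (Fin n) k)] {j : Fin n}
  (hA : ∀ σ : G, ∀ i ≠ j, σ • X i ∈ supported k {j}ᶜ)
  (hX : ∀ σ : G, σ • X j - X j ∈ supported k {j}ᶜ)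

include hA in
theorem normElt_mem_supported {i : Fin n} (hi : i ≠ j) :
    (normElt k n G i : MvPolynomial (Fin n) k) ∈ supported k {j}ᶜ :=
  Subalgebra.prod_mem _ fun σ _ => hA σ i hi

variable [SMulCommClass G k (MvPolynomial (Fin n) k)]

include hA hX in
theorem mem_of_normElt_mul_mem (𝓧 : Set (Subgroup G)) {r : invSub G (MvPolynomial (Fin n) k) ⊤}
    (hr : normElt k n G j * r ∈
      Ideal.span (normElt k n G '' {i | i < j}) ⊔ transferIdealFamily G _ 𝓧) :
    r ∈ Ideal.span (normElt k n G '' {i | i < j}) ⊔ transferIdealFamily G _ 𝓧 := by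
  set D := invSubMap (divByMonicInHom hA hX (fun σ => (normElt k n G j).2 ⟨σ, trivial⟩)
    (monic_splitVar_prod_smul_X hX)) ⊤
  have hD : D (normElt k n G j * r) = r :=
    Subtype.ext (divByMonicIn_mul_cancel_left (monic_splitVar_prod_smul_X hX) _)
  rw [← hD]
  obtain ⟨a, ha, b, hb, hab⟩ := Submodule.mem_sup.1 hr
  rw [← hab, map_add]
  refine add_mem (Ideal.apply_mem_of_forall_mul_mem D ?_ ha)
    (Ideal.mem_sup_right (invSubMap_mem_transferIdealFamily _ hb))
  rintro c _ ⟨i, hi, rfl⟩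
  have hDc : D (c * normElt k n G i) = normElt k n G i * D c := Subtype.ext <| by
    rw [mul_comm]
    exact divByMonicIn_mul_of_mem_supported (normElt_mem_supported hA (ne_of_lt hi)) _
  rw [hDc]
  exact Ideal.mem_sup_left (Ideal.mul_mem_right _ _ (Ideal.subset_span ⟨i, hi, rfl⟩))

end Norms

theorem normElt_regular_sequence_mod_transferIdeal_general
    (k : Type) [Field k]
    (G : Type) [Group G] [Fintype G]
    (n l : ℕ)
    [MulSemiringAction G (MvPolynomial (Fin n) k)]
    [SMulCommClass G k (MvPolynomial (Fin n) k)]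
    -- the action of `G` on `k[V]` is induced by a linear action on `V`:
    (hlin : ∀ (σ : G) (i : Fin n), (σ • (X i : MvPolynomial (Fin n) k)).IsHomogeneous 1)
    -- `v₁, …, v_l` is a basis of `V^G`, with dual variables `x₁, …, x_l`:
    (hfix : ∀ (σ : G) (i : Fin n) (j : Fin n), (j : ℕ) < l →
      coeff (Finsupp.single j 1) (σ • (X i : MvPolynomial (Fin n) k)) =
        if i = j then 1 else 0)
    (𝓧 : Set (Subgroup G)) :
    ∀ j : Fin n, (j : ℕ) < l →
      ∀ r : (invSub G (MvPolynomial (Fin n) k) ⊤) ⧸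
          transferIdealFamily G (MvPolynomial (Fin n) k) 𝓧,
        Ideal.Quotient.mk (transferIdealFamily G (MvPolynomial (Fin n) k) 𝓧)
            (normElt k n G j) * r ∈
          Ideal.span {y | ∃ i : Fin n, (i : ℕ) < (j : ℕ) ∧
            y = Ideal.Quotient.mk (transferIdealFamily G (MvPolynomial (Fin n) k) 𝓧)
              (normElt k n G i)} →
        r ∈ Ideal.span {y | ∃ i : Fin n, (i : ℕ) < (j : ℕ) ∧
            y = Ideal.Quotient.mk (transferIdealFamily G (MvPolynomial (Fin n) k) 𝓧)
              (normElt k n G i)} := by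
  intro j hj r hr
  obtain ⟨r, rfl⟩ := Ideal.Quotient.mk_surjective r
  have hA : ∀ σ : G, ∀ i ≠ j, σ • X i ∈ supported k {j}ᶜ := fun σ i hi =>
    mem_supported_compl_singleton_of_isHomogeneous_one (hlin σ i)
      (by rw [hfix σ i j hj, if_neg hi])
  have hX : ∀ σ : G, σ • X j - X j ∈ supported k {j}ᶜ := fun σ =>
    mem_supported_compl_singleton_of_isHomogeneous_one ((hlin σ j).sub (isHomogeneous_X k j))
      (by simp [hfix σ j j hj])
  set I := transferIdealFamily G (MvPolynomial (Fin n) k) 𝓧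
  have hspan :
      Ideal.span {y | ∃ i : Fin n, (i : ℕ) < j ∧ y = Ideal.Quotient.mk I (normElt k n G i)} =
        (Ideal.span (normElt k n G '' {i | i < j})).map (Ideal.Quotient.mk I) := by
    rw [Ideal.map_span, Set.image_image]
    congr 1
    ext
    simp [eq_comm]
  rw [hspan, ← map_mul, Ideal.mem_quotient_iff_mem_sup] at hr
  rw [hspan, Ideal.mem_quotient_iff_mem_sup]
  exact mem_of_normElt_mul_mem hA hX 𝓧 hr

/-- for a `p`-group `G` in characteristic `p`, `dim V^G = l`, and any
set `𝒳` of proper subgroups of `G`, the images of the norms `N₁, …, N_l` of the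
dual variables of the fixed basis vectors form a regular sequence in
`k[V]^G / I^G_𝒳`; in particular `depth(k[V]^G / I^G_𝒳) ≥ dim V^G`. -/
theorem normElt_regular_sequence_mod_transferIdeal
    (k : Type) [Field k] (p : ℕ) [Fact p.Prime] [CharP k p]
    (G : Type) [Group G] [Fintype G] (hG : IsPGroup p G)
    (n l : ℕ) (hl : l ≤ n)
    [MulSemiringAction G (MvPolynomial (Fin n) k)]
    [SMulCommClass G k (MvPolynomial (Fin n) k)]
    -- the action of `G` on `k[V]` is induced by a linear action on `V`:
    (hlin : ∀ (σ : G) (i : Fin n), (σ • (X i : MvPolynomial (Fin n) k)).IsHomogeneous 1)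
    -- `v₁, …, v_l` is a basis of `V^G`, with dual variables `x₁, …, x_l`:
    (hfix : ∀ (σ : G) (i : Fin n) (j : Fin n), (j : ℕ) < l →
      coeff (Finsupp.single j 1) (σ • (X i : MvPolynomial (Fin n) k)) =
        if i = j then 1 else 0)
    (𝓧 : Set (Subgroup G)) (h𝓧 : ∀ X ∈ 𝓧, X ≠ ⊤) :
    ∀ j : Fin n, (j : ℕ) < l →
      ∀ r : (invSub G (MvPolynomial (Fin n) k) ⊤) ⧸
          transferIdealFamily G (MvPolynomial (Fin n) k) 𝓧,
        Ideal.Quotient.mk (transferIdealFamily G (MvPolynomial (Fin n) k) 𝓧)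
            (normElt k n G j) * r ∈
          Ideal.span {y | ∃ i : Fin n, (i : ℕ) < (j : ℕ) ∧
            y = Ideal.Quotient.mk (transferIdealFamily G (MvPolynomial (Fin n) k) 𝓧)
              (normElt k n G i)} →
        r ∈ Ideal.span {y | ∃ i : Fin n, (i : ℕ) < (j : ℕ) ∧
            y = Ideal.Quotient.mk (transferIdealFamily G (MvPolynomial (Fin n) k) 𝓧)
              (normElt k n G i)} :=
  normElt_regular_sequence_mod_transferIdeal_general k G n l hlin hfix 𝓧
end

section
/- Let G = ⟨σ⟩ be cyclic of order p^r over k of characteristic p, K = ⟨σ^{p^a}⟩, H = ⟨σ^{p^b}⟩ with 0 < b ≤ a, and suppose V_n (with p^a − p^b + 1 ≤ n ≤ p^a − 1) is a kG-module with Jordan basis e_1,...,e_n, σ(e_i) = e_i + e_{i−1}. Then e_1 ∈ Tr^H_K(V_n) but e_1 ∉ Tr^G_K(V_n); that is, e_1 lies in the image of Δ^{p^a − p^b} on V_n but not in the image of Δ^{p^a − 1} on V_n. -/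
private def shiftF (k : Type) [Field k] (n : ℕ) : (Fin n → k) → (Fin n → k) :=
  fun v => (fun j : Fin n => v j + (if h : (j : ℕ) + 1 < n then v ⟨(j : ℕ) + 1, h⟩ else 0)) - v

private lemma shiftF_apply {k : Type} [Field k] {n : ℕ} (v : Fin n → k) (j : Fin n) :
    shiftF k n v j = if h : (j : ℕ) + 1 < n then v ⟨(j : ℕ) + 1, h⟩ else 0 := by
  simp [shiftF]

private lemma shiftF_iter {k : Type} [Field k] {n : ℕ} (m : ℕ) (v : Fin n → k) (j : Fin n) :
    (shiftF k n)^[m] v j = if h : (j : ℕ) + m < n then v ⟨(j : ℕ) + m, h⟩ else 0 := by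
  induction m generalizing v j with
  | zero => simp
  | succ m ih =>
    rw [Function.iterate_succ_apply, ih]
    by_cases h : (j : ℕ) + m < n
    · rw [dif_pos h, shiftF_apply]
      by_cases h2 : (j : ℕ) + (m + 1) < n
      · rw [dif_pos (show ((⟨(j:ℕ)+m, h⟩ : Fin n) : ℕ) + 1 < n by simpa using by omega),
          dif_pos h2]
        exact congrArg v (Fin.ext (by simp [Nat.add_assoc]))
      · rw [dif_neg (show ¬(((⟨(j:ℕ)+m, h⟩ : Fin n) : ℕ) + 1 < n) by simpa using by omega),
          dif_neg h2]
    · rw [dif_neg h, dif_neg (by omega)]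

/-- for the cyclic group `G = ⟨σ⟩` of order `p^r` in characteristic
`p`, subgroups `K = ⟨σ^{p^a}⟩ ≤ H = ⟨σ^{p^b}⟩` with `0 < b ≤ a`, and the
indecomposable Jordan-block module `V_n` with `p^a − p^b + 1 ≤ n ≤ p^a − 1`
(so `V_n^K = V_n`), the fixed vector `e₁` lies in the image of
`Tr^H_K = Δ^{p^a − p^b}` on `V_n` but not in the image of
`Tr^G_K = Δ^{p^a − 1}`, where `Δ = σ − 1`. -/
theorem jordan_e1_in_image_of_relative_transfer_not_in_full_transfer
    (k : Type) [Field k] (p : ℕ) [Fact p.Prime] [CharP k p]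
    (r a b n : ℕ) (hb : 0 < b) (hba : b ≤ a) (har : a ≤ r)
    (hn1 : p ^ a - p ^ b + 1 ≤ n) (hn2 : n ≤ p ^ a - 1) :
    -- `σ` is the Jordan block `σ(e_i) = e_i + e_{i-1}`, i.e. in coordinates
    -- `(σ v)_j = v_j + v_{j+1}`; `Δ = σ − 1`.
    (Pi.single (⟨0, by omega⟩ : Fin n) (1 : k) ∈
      Set.range ((fun v : Fin n → k =>
        (fun j : Fin n => v j + (if h : (j : ℕ) + 1 < n then v ⟨(j : ℕ) + 1, h⟩ else 0)) - v)
          ^[p ^ a - p ^ b])) ∧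
    (Pi.single (⟨0, by omega⟩ : Fin n) (1 : k) ∉
      Set.range ((fun v : Fin n → k =>
        (fun j : Fin n => v j + (if h : (j : ℕ) + 1 < n then v ⟨(j : ℕ) + 1, h⟩ else 0)) - v)
          ^[p ^ a - 1])) := by
  have hpow : p ^ b ≤ p ^ a := Nat.pow_le_pow_right (Nat.Prime.pos Fact.out) hba
  constructor
  · refine ⟨Pi.single (⟨p ^ a - p ^ b, by omega⟩ : Fin n) 1, ?_⟩
    show (shiftF k n)^[p ^ a - p ^ b] _ = _
    funext j
    rw [shiftF_iter]
    by_cases h : (j : ℕ) + (p ^ a - p ^ b) < n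
    · rw [dif_pos h]
      rw [Pi.single_apply, Pi.single_apply]
      rcases eq_or_ne (j : ℕ) 0 with hj | hj
      · rw [if_pos (Fin.ext (by simpa using hj)), if_pos (Fin.ext (by simpa using hj))]
      · rw [if_neg (fun he => hj (by simpa using congrArg Fin.val he)),
          if_neg (fun he => hj (by have := congrArg Fin.val he; simp at this; omega))]
    · rw [dif_neg h, Pi.single_apply, if_neg, eq_comm]
      intro he
      apply h
      have : (j : ℕ) = 0 := by simpa using congrArg Fin.val he
      omega
  · rintro ⟨v, hv⟩
    have := congrFun hv ⟨0, by omega⟩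
    rw [show (fun v : Fin n → k =>
        (fun j : Fin n => v j + (if h : (j : ℕ) + 1 < n then v ⟨(j : ℕ) + 1, h⟩ else 0)) - v)
        = shiftF k n from rfl, shiftF_iter, dif_neg (by simp; omega)] at this
    simp at this
end

section
/- Let G = ⟨σ₁, σ₂⟩ ≅ C₂ × C₂ act over a field k of characteristic 2 on the 3-dimensional module V = Ω¹(k) with dual basis x₁, y₁, y₂ of V* where σ_i(y_j) = y_j, σ₁(x₁) = x₁ + y₁, σ₂(x₁) = x₁ + y₂. Then the ring of invariants is the polynomial ring k[V]^G = k[y₁, y₂, N(x₁)] where N(x₁) = Π_{g∈G} g·x₁ = x₁(x₁+y₁)(x₁+y₂)(x₁+y₁+y₂). -/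
open MvPolynomial

/-- The Klein four group `C₂ × C₂`. -/
abbrev K4 := Multiplicative (ZMod 2 × ZMod 2)

/-- The first generator `σ₁` of the Klein four group. -/
def s1 : K4 := Multiplicative.ofAdd (1, 0)

/-- The second generator `σ₂` of the Klein four group. -/
def s2 : K4 := Multiplicative.ofAdd (0, 1)

/-- The invariant subalgebra `R^G` of a `k`-algebra `R` with a `k`-linear
action of `G`. -/
def invAlgebra (k G R : Type) [CommSemiring k] [Group G] [CommRing R] [Algebra k R]
    [MulSemiringAction G R] [SMulCommClass G k R] : Subalgebra k R where
  carrier := {f : R | ∀ g : G, g • f = f}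
  mul_mem' := fun ha hb g => by rw [smul_mul', ha g, hb g]
  add_mem' := fun ha hb g => by rw [smul_add, ha g, hb g]
  algebraMap_mem' := fun a g => by
    rw [Algebra.algebraMap_eq_smul_one, smul_comm, smul_one]


/-!
Through `finSuccEquiv`, `k[x₁, y₁, y₂] = A[x₁]` with `A = k[y₁, y₂]`, and `σ₁`, `σ₂` act as the
translations `x₁ ↦ x₁ + y₁`, `x₁ ↦ x₁ + y₂`; an invariant is therefore fixed by translation by
each of the four distinct elements `0, y₁, y₂, y₁ + y₂` of `A`. The norm `N(x₁)` is such an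
invariant, monic of degree 4 in `x₁`. Division by `N(x₁)` has invariant quotient and remainder,
and an invariant of degree `< 4` takes the same value at four points, hence lies in `A`; induction
on the degree gives `k[V]^G = A[N(x₁)]`. Algebraic independence holds because substituting a monic
nonconstant polynomial for `x₁` is injective.
-/

namespace Polynomial

variable {A : Type*} [CommRing A]

theorem taylor_divByMonic_modByMonic {P : A[X]} (hP : P.Monic) {c : A} (hPc : taylor c P = P)
    (F : A[X]) : taylor c F /ₘ P = taylor c (F /ₘ P) ∧ taylor c F %ₘ P = taylor c (F %ₘ P) := by
  nontriviality A
  refine div_modByMonic_unique _ _ hP ⟨?_, ?_⟩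
  · conv_rhs => rw [← modByMonic_add_div F P, map_add, taylor_mul, hPc]
  · rw [degree_taylor]
    exact degree_modByMonic_lt F hP

theorem taylor_eq_self_of_mem_pair_sums [DecidableEq A] {a b : A} {F : A[X]}
    (ha : taylor a F = F) (hb : taylor b F = F) :
    ∀ s ∈ ({0, a, b, a + b} : Finset A), taylor s F = F := by
  simp only [Finset.mem_insert, Finset.mem_singleton]
  rintro s (rfl | rfl | rfl | rfl)
  · exact taylor_zero F
  · exact ha
  · exact hb
  · rw [← taylor_taylor, hb, ha]

variable [IsDomain A]

theorem eq_C_eval_zero_of_taylor_eq_self {S : Finset A} {F : A[X]}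
    (hF : ∀ s ∈ S, taylor s F = F) (hdeg : F.natDegree < S.card) : F = C (F.eval 0) := by
  refine eq_of_natDegree_lt_card_of_eval_eq' _ _ S (fun s hs => ?_) (by simpa using hdeg)
  rw [eval_C, ← zero_add s, ← taylor_eval, hF s hs]

theorem mem_adjoin_of_taylor_eq_self {S : Finset A} {P : A[X]} (hP : P.Monic)
    (hP0 : 0 < P.natDegree) (hPS : P.natDegree ≤ S.card) (hPinv : ∀ s ∈ S, taylor s P = P)
    {F : A[X]} (hF : ∀ s ∈ S, taylor s F = F) : F ∈ Algebra.adjoin A {P} := by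
  induction hn : F.natDegree using Nat.strong_induction_on generalizing F with
  | _ n ih =>
    rcases Nat.eq_zero_or_pos n with rfl | hn0
    · rw [eq_C_of_natDegree_eq_zero hn]
      exact Subalgebra.algebraMap_mem _ _
    have hdigits : ∀ s ∈ S, taylor s (F /ₘ P) = F /ₘ P ∧ taylor s (F %ₘ P) = F %ₘ P := by
      intro s hs
      obtain ⟨hdiv, hmod⟩ := taylor_divByMonic_modByMonic hP (hPinv s hs) F
      rw [hF s hs] at hdiv hmod
      exact ⟨hdiv.symm, hmod.symm⟩
    have hmod : F %ₘ P = C ((F %ₘ P).eval 0) := by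
      refine eq_C_eval_zero_of_taylor_eq_self (fun s hs => (hdigits s hs).2) ?_
      refine (natDegree_modByMonic_lt F hP fun h => ?_).trans_le hPS
      simp [h] at hP0
    have hdiv : (F /ₘ P).natDegree < n := by
      rw [natDegree_divByMonic F hP]
      omega
    rw [← modByMonic_add_div F P, hmod]
    exact add_mem (Subalgebra.algebraMap_mem _ _) <|
      mul_mem (Algebra.self_mem_adjoin_singleton A P) (ih _ hdiv (fun s hs => (hdigits s hs).1) rfl)

end Polynomial

namespace MvPolynomial

variable {R : Type*} [CommRing R] {n : ℕ}

noncomputable def substFirst (g : MvPolynomial (Fin (n + 1)) R) :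
    MvPolynomial (Fin (n + 1)) R →ₐ[R] MvPolynomial (Fin (n + 1)) R :=
  aeval (Fin.cons g fun i : Fin n => X i.succ)

theorem finSuccEquiv_substFirst (g f : MvPolynomial (Fin (n + 1)) R) :
    finSuccEquiv R n (substFirst g f) = (finSuccEquiv R n f).comp (finSuccEquiv R n g) := by
  rw [Polynomial.comp_eq_aeval]
  show ((finSuccEquiv R n).toAlgHom.comp (aeval _)) f =
    (((Polynomial.aeval (finSuccEquiv R n g)).restrictScalars R).comp
      (finSuccEquiv R n).toAlgHom) f
  congr 1
  refine algHom_ext fun i => ?_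
  cases i using Fin.cases <;> simp [finSuccEquiv_X_zero, finSuccEquiv_X_succ]

theorem smul_eq_substFirst {G : Type*} [Monoid G]
    [MulSemiringAction G (MvPolynomial (Fin (n + 1)) R)]
    [SMulCommClass G R (MvPolynomial (Fin (n + 1)) R)] {g : G}
    (hg : ∀ i : Fin n, g • (X i.succ : MvPolynomial (Fin (n + 1)) R) = X i.succ)
    (f : MvPolynomial (Fin (n + 1)) R) : g • f = substFirst (g • X 0) f := by
  rw [← MulSemiringAction.toAlgHom_apply R, aeval_unique (MulSemiringAction.toAlgHom R _ g)]
  congr 2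
  funext i
  cases i using Fin.cases <;> simp [hg]

theorem finSuccEquiv_smul {G : Type*} [Monoid G]
    [MulSemiringAction G (MvPolynomial (Fin (n + 1)) R)]
    [SMulCommClass G R (MvPolynomial (Fin (n + 1)) R)] {g : G}
    (hg : ∀ i : Fin n, g • (X i.succ : MvPolynomial (Fin (n + 1)) R) = X i.succ) {j : Fin n}
    (h0 : g • (X 0 : MvPolynomial (Fin (n + 1)) R) = X 0 + X j.succ)
    (f : MvPolynomial (Fin (n + 1)) R) :
    finSuccEquiv R n (g • f) = Polynomial.taylor (X j) (finSuccEquiv R n f) := by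
  rw [smul_eq_substFirst hg, finSuccEquiv_substFirst, h0, map_add, finSuccEquiv_X_zero,
    finSuccEquiv_X_succ, Polynomial.taylor_apply]

theorem algebraicIndependent_cons_X_succ {g : MvPolynomial (Fin (n + 1)) R}
    (hmonic : (finSuccEquiv R n g).Monic) (hdeg : (finSuccEquiv R n g).natDegree ≠ 0) :
    AlgebraicIndependent R (Fin.cons g fun i : Fin n => (X i.succ : MvPolynomial _ R)) := by
  have htr := Polynomial.transcendental _ hdeg (hmonic.leadingCoeff ▸ one_mem _)
  refine algebraicIndependent_iff_injective_aeval.mpr fun f₁ f₂ h => ?_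
  change substFirst g f₁ = substFirst g f₂ at h
  apply (finSuccEquiv R n).injective
  apply transcendental_iff_injective.mp htr
  simpa only [finSuccEquiv_substFirst, Polynomial.comp_eq_aeval] using
    congrArg (finSuccEquiv R n) h

theorem mem_adjoin_insert_of_finSuccEquiv_mem_adjoin {g f : MvPolynomial (Fin (n + 1)) R}
    (h : finSuccEquiv R n f ∈ Algebra.adjoin (MvPolynomial (Fin n) R) {finSuccEquiv R n g}) :
    f ∈ Algebra.adjoin R (insert g (Set.range fun i : Fin n => X i.succ)) := by
  rw [← Fin.range_cons, Algebra.adjoin_range_eq_range_aeval]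
  rw [Algebra.adjoin_singleton_eq_range_aeval] at h
  obtain ⟨q, hq⟩ := h
  refine ⟨(finSuccEquiv R n).symm q, (finSuccEquiv R n).injective ?_⟩
  rw [AlgHom.toRingHom_eq_coe, RingHom.coe_coe, ← substFirst, finSuccEquiv_substFirst,
    AlgEquiv.apply_symm_apply, Polynomial.comp_eq_aeval, ← hq]
  rfl

theorem card_zero_X_X_add_X {σ : Type*} [Nontrivial R] [DecidableEq (MvPolynomial σ R)]
    {i j : σ} (hij : i ≠ j) : ({0, X i, X j, X i + X j} : Finset (MvPolynomial σ R)).card = 4 := by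
  have h : (X i + X j : MvPolynomial σ R) ≠ 0 := fun h => by
    classical
    simpa [coeff_X, Finsupp.single_eq_single_iff, hij.symm] using
      congrArg (coeff (Finsupp.single i 1)) h
  rw [Finset.card_insert_of_notMem, Finset.card_insert_of_notMem, Finset.card_pair]
  all_goals simp [eq_comm, X_ne_zero, h, X_injective.eq_iff, hij]

end MvPolynomial

noncomputable def kleinNorm (R : Type*) [CommRing R] : MvPolynomial (Fin 3) R :=
  X 0 * (X 0 + X 1) * (X 0 + X 2) * (X 0 + X 1 + X 2)

theorem finSuccEquiv_kleinNorm (R : Type*) [CommRing R] [Nontrivial R] :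
    (finSuccEquiv R 2 (kleinNorm R)).Monic ∧ (finSuccEquiv R 2 (kleinNorm R)).natDegree = 4 := by
  have h1 : finSuccEquiv R 2 (X 1) = Polynomial.C (X 0) := finSuccEquiv_X_succ (j := 0)
  have h2 : finSuccEquiv R 2 (X 2) = Polynomial.C (X 1) := finSuccEquiv_X_succ (j := 1)
  simp only [kleinNorm, map_mul, map_add, finSuccEquiv_X_zero, h1, h2]
  exact ⟨by monicity!, by compute_degree!⟩

namespace K4

theorem univ_eq : (Finset.univ : Finset K4) = {1, s1, s2, s1 * s2} := by decide

theorem prod_univ {M : Type*} [CommMonoid M] (f : K4 → M) :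
    ∏ g, f g = f 1 * f s1 * f s2 * f (s1 * s2) := by
  rw [univ_eq, Finset.prod_insert (by decide), Finset.prod_insert (by decide),
    Finset.prod_pair (by decide)]
  simp only [mul_assoc]

theorem smul_eq_self_of_s1_s2 {α : Type*} [MulAction K4 α] {a : α} (h1 : s1 • a = a)
    (h2 : s2 • a = a) (g : K4) : g • a = a := by
  have hg := Finset.mem_univ g
  rw [univ_eq] at hg
  simp only [Finset.mem_insert, Finset.mem_singleton] at hg
  rcases hg with rfl | rfl | rfl | rfl
  · exact one_smul K4 a
  · exact h1
  · exact h2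
  · rw [mul_smul, h2, h1]

end K4

theorem smul_prod_smul_eq {G M : Type*} [Group G] [Fintype G] [CommMonoid M]
    [MulDistribMulAction G M] (g : G) (x : M) : g • ∏ h : G, h • x = ∏ h : G, h • x := by
  rw [Finset.smul_prod']
  exact Fintype.prod_equiv (Equiv.mulLeft g) _ _ fun h => (mul_smul g h x).symm

/-- Here `x₁ = X 0`, `y₁ = X 1`, `y₂ = X 2`. -/
theorem klein_omega_one_invariant_ring_general
    (k : Type) [Field k]
    [MulSemiringAction K4 (MvPolynomial (Fin 3) k)]
    [SMulCommClass K4 k (MvPolynomial (Fin 3) k)]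
    (hy1 : s1 • (X 1 : MvPolynomial (Fin 3) k) = X 1)
    (hy1' : s2 • (X 1 : MvPolynomial (Fin 3) k) = X 1)
    (hy2 : s1 • (X 2 : MvPolynomial (Fin 3) k) = X 2)
    (hy2' : s2 • (X 2 : MvPolynomial (Fin 3) k) = X 2)
    (hx1 : s1 • (X 0 : MvPolynomial (Fin 3) k) = X 0 + X 1)
    (hx2 : s2 • (X 0 : MvPolynomial (Fin 3) k) = X 0 + X 2) :
    (∏ g : K4, g • (X 0 : MvPolynomial (Fin 3) k) =
      X 0 * (X 0 + X 1) * (X 0 + X 2) * (X 0 + X 1 + X 2)) ∧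
    invAlgebra k K4 (MvPolynomial (Fin 3) k) =
      Algebra.adjoin k {X 1, X 2, ∏ g : K4, g • (X 0 : MvPolynomial (Fin 3) k)} ∧
    AlgebraicIndependent k
      ![(X 1 : MvPolynomial (Fin 3) k), X 2, ∏ g : K4, g • (X 0 : MvPolynomial (Fin 3) k)] := by
  classical
  have hN : ∏ g : K4, g • (X 0 : MvPolynomial (Fin 3) k) = kleinNorm k := by
    rw [K4.prod_univ, one_smul, mul_smul, hx2, smul_add, hx1, hy2, kleinNorm]
  have hfix (g : K4) (i : Fin 2) : g • (X i.succ : MvPolynomial (Fin 3) k) = X i.succ := by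
    fin_cases i
    exacts [K4.smul_eq_self_of_s1_s2 hy1 hy1' g, K4.smul_eq_self_of_s1_s2 hy2 hy2' g]
  have hinv {f : MvPolynomial (Fin 3) k} (hf : ∀ g : K4, g • f = f) :
      ∀ s ∈ ({0, X 0, X 1, X 0 + X 1} : Finset (MvPolynomial (Fin 2) k)),
        Polynomial.taylor s (finSuccEquiv k 2 f) = finSuccEquiv k 2 f :=
    Polynomial.taylor_eq_self_of_mem_pair_sums
      (by rw [← finSuccEquiv_smul (hfix s1) (j := 0) hx1, hf])
      (by rw [← finSuccEquiv_smul (hfix s2) (j := 1) hx2, hf])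
  have hNinv (g : K4) : g • kleinNorm k = kleinNorm k := hN ▸ smul_prod_smul_eq g _
  obtain ⟨hmonic, hdeg⟩ := finSuccEquiv_kleinNorm k
  rw [hN]
  refine ⟨rfl, le_antisymm (fun f hf => ?_) ?_, ?_⟩
  · refine Algebra.adjoin_mono ?_ <| mem_adjoin_insert_of_finSuccEquiv_mem_adjoin <|
      Polynomial.mem_adjoin_of_taylor_eq_self hmonic (by omega)
        (by rw [hdeg, card_zero_X_X_add_X (by decide)]) (hinv hNinv) (hinv hf)
    exact Set.insert_subset_iff.2 ⟨by simp, Set.range_subset_iff.2 fun i => by fin_cases i <;> simp⟩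
  · rw [Algebra.adjoin_le_iff]
    rintro f (rfl | rfl | rfl)
    exacts [(hfix · 0), (hfix · 1), hNinv]
  · convert (algebraicIndependent_cons_X_succ hmonic (by omega)).comp ![1, 2, 0] (by decide)
      using 1
    funext i
    fin_cases i <;> rfl

/-- for the Klein four group acting on the 3-dimensional module
`V = Ω¹(k)` in characteristic 2 (with `x₁ = X 0`, `y₁ = X 1`, `y₂ = X 2`), the
ring of invariants is the polynomial ring `k[V]^G = k[y₁, y₂, N(x₁)]`, where
`N(x₁) = Π_{g∈G} g·x₁ = x₁(x₁+y₁)(x₁+y₂)(x₁+y₁+y₂)`. -/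
theorem klein_omega_one_invariant_ring
    (k : Type) [Field k] [CharP k 2]
    [MulSemiringAction K4 (MvPolynomial (Fin 3) k)]
    [SMulCommClass K4 k (MvPolynomial (Fin 3) k)]
    (hy1 : s1 • (X 1 : MvPolynomial (Fin 3) k) = X 1)
    (hy1' : s2 • (X 1 : MvPolynomial (Fin 3) k) = X 1)
    (hy2 : s1 • (X 2 : MvPolynomial (Fin 3) k) = X 2)
    (hy2' : s2 • (X 2 : MvPolynomial (Fin 3) k) = X 2)
    (hx1 : s1 • (X 0 : MvPolynomial (Fin 3) k) = X 0 + X 1)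
    (hx2 : s2 • (X 0 : MvPolynomial (Fin 3) k) = X 0 + X 2) :
    (∏ g : K4, g • (X 0 : MvPolynomial (Fin 3) k) =
      X 0 * (X 0 + X 1) * (X 0 + X 2) * (X 0 + X 1 + X 2)) ∧
    invAlgebra k K4 (MvPolynomial (Fin 3) k) =
      Algebra.adjoin k {X 1, X 2, ∏ g : K4, g • (X 0 : MvPolynomial (Fin 3) k)} ∧
    AlgebraicIndependent k
      ![(X 1 : MvPolynomial (Fin 3) k), X 2, ∏ g : K4, g • (X 0 : MvPolynomial (Fin 3) k)] :=
  klein_omega_one_invariant_ring_general k hy1 hy1' hy2 hy2' hx1 hx2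
end
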